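/- Let Λ = ℤ[t_1,…,t_n] be the polynomial ring in n variables and let C = Λ[ζ]/(∏_{i=1}^n (ζ + t_i)). For each i the evaluation ζ ↦ −t_i induces a Λ-algebra homomorphism C → Λ; together these give a Λ-algebra homomorphism φ : C → Λ^{⊕n}, φ(ζ) = (−t_1, …, −t_n). A tuple (u_1, …, u_n) ∈ Λ^{⊕n} lies in the image of φ if and only if for all i ≠ j the difference u_i − u_j is divisible by t_j − t_i in Λ. -/

import Mathlib

open Polynomial

/-- `Λ = ℤ[t_1, …, t_n]`. -/
abbrev Lam (n : ℕ) : Type := MvPolynomial (Fin n) ℤ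

/-- The polynomial `∏_{i=1}^n (ζ + t_i)` in `Λ[ζ]`. -/
noncomputable def relPoly (n : ℕ) : Polynomial (Lam n) :=
  ∏ i : Fin n, (Polynomial.X + Polynomial.C (MvPolynomial.X i))

/-- `C = Λ[ζ] / (∏_{i=1}^n (ζ + t_i))`, the equivariant cohomology ring `H_T^* ℙ^{n-1}`. -/
abbrev CRing (n : ℕ) : Type := Polynomial (Lam n) ⧸ Ideal.span {relPoly n}

/-- The `Λ`-algebra homomorphism `Λ[ζ] → Λ^{⊕ n}` sending `ζ` to `(-t_1, …, -t_n)`,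
given in the `i`-th coordinate by evaluation `ζ ↦ -t_i`. -/
noncomputable def evalAll (n : ℕ) : Polynomial (Lam n) →ₐ[Lam n] (Fin n → Lam n) :=
  Pi.algHom _ _ fun i => Polynomial.aeval (-(MvPolynomial.X i))

lemma evalAll_relPoly (n : ℕ) : evalAll n (relPoly n) = 0 := by
  funext i
  show Polynomial.aeval (-(MvPolynomial.X i)) (relPoly n) = 0
  rw [relPoly, map_prod]
  refine Finset.prod_eq_zero (Finset.mem_univ i) ?_
  simp

/-- The induced `Λ`-algebra homomorphism `φ : C → Λ^{⊕ n}`, `φ(ζ) = (-t_1, …, -t_n)`,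
i.e. the restriction of `H_T^* ℙ^{n-1}` to the torus-fixed points. -/
noncomputable def phi (n : ℕ) : CRing n →ₐ[Lam n] (Fin n → Lam n) :=
  Ideal.Quotient.liftₐ _ (evalAll n) (by
    intro a ha
    rw [Ideal.mem_span_singleton] at ha
    obtain ⟨c, rfl⟩ := ha
    rw [map_mul, evalAll_relPoly, zero_mul])

/-!
Every `φ(p)` satisfies the conditions because `X - Y ∣ p(X) - p(Y)`. Conversely, a tuple
satisfying them is interpolated by Newton's method with nodes `-t_i`, adding one node at a time:
if `p` already takes the values `u_j` at `-t_j` for `j ∈ s`, each `t_j - t_a` divides the defect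
`u_a - p(-t_a)`, and since these are pairwise non-associate primes of the factorial ring `Λ`, so
does their product; the correction `c · ∏_{j ∈ s} (ζ + t_j)` then fixes the value at `-t_a`
without disturbing the others.
-/

namespace Polynomial

open Lagrange

theorem exists_eval_eq_of_sub_dvd_sub {R ι : Type*} [CommRing R] [DecompositionMonoid R]
    {x u : ι → R}
    (hx : ∀ i, ({i}ᶜ : Set ι).Pairwise fun j k => IsRelPrime (x i - x j) (x i - x k))
    (hu : ∀ i j, i ≠ j → x i - x j ∣ u i - u j) (s : Finset ι) :
    ∃ p : R[X], ∀ i ∈ s, p.eval (x i) = u i := by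
  classical
  induction s using Finset.induction_on with
  | empty => exact ⟨0, by simp⟩
  | insert a s ha ih =>
    obtain ⟨p, hp⟩ := ih
    have hdvd : ∀ j ∈ s, x a - x j ∣ u a - p.eval (x a) := fun j hj => by
      have hja : j ≠ a := ne_of_mem_of_not_mem hj ha
      have h := dvd_sub (hu a j hja.symm) (sub_dvd_eval_sub (x a) (x j) p)
      rwa [hp j hj, sub_sub_sub_cancel_right] at h
    obtain ⟨c, hc⟩ := Finset.prod_dvd_of_isRelPrime
      ((hx a).mono fun j hj => Set.mem_compl_singleton_iff.2 (ne_of_mem_of_not_mem hj ha)) hdvd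
    refine ⟨p + C c * nodal s x, (Finset.forall_mem_insert _ _ _).2 ⟨?_, fun i hi => ?_⟩⟩
    · rw [eval_add, eval_mul, eval_C, eval_nodal, mul_comm, ← hc, add_sub_cancel]
    · rw [eval_add, eval_mul, eval_nodal_at_node hi, mul_zero, add_zero, hp i hi]

end Polynomial

namespace MvPolynomial

variable {σ R : Type*} [CommRing R]

noncomputable def polynomialEquivSubtypeNe [DecidableEq σ] (j : σ) :
    MvPolynomial σ R ≃ₐ[R] Polynomial (MvPolynomial {k // k ≠ j} R) :=
  (renameEquiv R (Equiv.optionSubtypeNe j).symm).trans (optionEquivLeft R _)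

@[simp]
lemma polynomialEquivSubtypeNe_X_self [DecidableEq σ] (j : σ) :
    polynomialEquivSubtypeNe j (X j : MvPolynomial σ R) = Polynomial.X := by
  simp [polynomialEquivSubtypeNe, optionEquivLeft_X_none]

lemma polynomialEquivSubtypeNe_X_of_ne [DecidableEq σ] {j k : σ} (h : k ≠ j) :
    polynomialEquivSubtypeNe j (X k : MvPolynomial σ R) = Polynomial.C (X ⟨k, h⟩) := by
  simp [polynomialEquivSubtypeNe, Equiv.optionSubtypeNe_symm_of_ne h, optionEquivLeft_X_some]

theorem prime_X_sub_X [IsDomain R] {i j : σ} (h : i ≠ j) :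
    Prime (X j - X i : MvPolynomial σ R) := by
  classical
  rw [← MulEquiv.prime_iff (polynomialEquivSubtypeNe j : MvPolynomial σ R ≃ₐ[R] _).toMulEquiv]
  simpa [polynomialEquivSubtypeNe_X_of_ne h] using Polynomial.prime_X_sub_C _

theorem X_sub_X_not_dvd [Nontrivial R] {i j k : σ} (hij : i ≠ j) (hkj : k ≠ j) (hik : i ≠ k) :
    ¬ (X j - X i : MvPolynomial σ R) ∣ X k - X i := by
  classical
  rw [← map_dvd_iff (polynomialEquivSubtypeNe j : MvPolynomial σ R ≃ₐ[R] _), map_sub, map_sub,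
    polynomialEquivSubtypeNe_X_self, polynomialEquivSubtypeNe_X_of_ne hij,
    polynomialEquivSubtypeNe_X_of_ne hkj, ← Polynomial.C_sub, Polynomial.dvd_iff_isRoot,
    Polynomial.IsRoot.def, Polynomial.eval_C, sub_eq_zero]
  exact fun h => hik (Subtype.ext_iff.1 (X_injective h)).symm

theorem isRelPrime_X_sub_X [IsDomain R] {i j k : σ} (hji : j ≠ i) (hki : k ≠ i) (hjk : j ≠ k) :
    IsRelPrime (X j - X i : MvPolynomial σ R) (X k - X i) :=
  (prime_X_sub_X hji.symm).irreducible.isRelPrime_iff_not_dvd.2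
    (X_sub_X_not_dvd hji.symm hjk.symm hki.symm)

end MvPolynomial

lemma phi_mk_apply (n : ℕ) (p : Polynomial (Lam n)) (i : Fin n) :
    phi n (Ideal.Quotient.mk _ p) i = p.eval (-MvPolynomial.X i) :=
  rfl

lemma mem_range_phi_iff_exists_eval (n : ℕ) (u : Fin n → Lam n) :
    u ∈ Set.range (phi n) ↔ ∃ p : Polynomial (Lam n), ∀ i, p.eval (-MvPolynomial.X i) = u i := by
  simp only [Set.mem_range, Ideal.Quotient.mk_surjective.exists, funext_iff, phi_mk_apply]

/-- GKM description of the image of localization for `ℙ^{n-1}`: a tuple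
`(u_1, …, u_n) ∈ Λ^{⊕ n}` is in the image of `φ` if and only if `t_j - t_i` divides
`u_i - u_j` for all `i ≠ j`. -/
theorem mem_range_phi_iff (n : ℕ) (u : Fin n → Lam n) :
    u ∈ Set.range (phi n) ↔
      ∀ i j : Fin n, i ≠ j →
        (MvPolynomial.X j - MvPolynomial.X i : Lam n) ∣ (u i - u j) := by
  rw [mem_range_phi_iff_exists_eval]
  constructor
  · rintro ⟨p, hp⟩ i j -
    rw [← hp i, ← hp j]
    simpa only [neg_sub_neg] using
      Polynomial.sub_dvd_eval_sub (-MvPolynomial.X i) (-MvPolynomial.X j) p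
  · intro hu
    have hx (i : Fin n) : ({i}ᶜ : Set (Fin n)).Pairwise fun j k =>
        IsRelPrime (-MvPolynomial.X i - -MvPolynomial.X j : Lam n)
          (-MvPolynomial.X i - -MvPolynomial.X k) := fun j hj k hk hjk => by
      simpa only [neg_sub_neg] using MvPolynomial.isRelPrime_X_sub_X hj hk hjk
    obtain ⟨p, hp⟩ := Polynomial.exists_eval_eq_of_sub_dvd_sub hx
      (fun i j hij => by simpa only [neg_sub_neg] using hu i j hij) Finset.univ
    exact ⟨p, fun i => hp i (Finset.mem_univ i)⟩
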